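/- arXiv:2211.07410 — 2 statements merged into one kernel-verified Lean document; each statement's English description precedes it below -/
import Mathlib

section
/- Heat transfer equation. Let the system A be composed of N subsystems with joint Hilbert space (⊗_{k=1}^N H_{A_k}) ⊗ H_B, H_A = Σ_k H_{A_k} + H_{AI} with each H_{A_k} Hermitian acting on the factor H_{A_k} and H_{AI} Hermitian acting on ⊗_k H_{A_k}, H_B Hermitian acting on H_B, and H_I Hermitian with [H_I, H_A + H_B] = 0; set H = H_A + H_B + H_I. Let ρ be a density matrix whose reduced states on the subsystems are Gibbs: ρ_{A_k} = e^{−β_{A_k}H_{A_k}}/Z_{A_k} and ρ_B = e^{−β_B H_B}/Z_B, let β_A = min_k β_{A_k}, let ρ′ = e^{−iHt}ρe^{iHt}, and let Q = tr[(ρ′ − ρ)H_B]. Then (β_B − β_A)·Q = Σ_{k=1}^N S(ρ′_{A_k}‖ρ_{A_k}) + S(ρ′_B‖ρ_B) + ΔI_{AB} + ΔT_A + ΔJ_A, where ΔI_{AB} = I(ρ′) − I(ρ) with the multipartite mutual information I(ϱ) = Σ_k S(ϱ_{A_k}) + S(ϱ_B) − S(ϱ), ΔT_A = Σ_k (β_A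 − β_{A_k}) tr[(ρ′ − ρ)H_{A_k}], and ΔJ_A = β_A tr[(ρ′ − ρ)H_{AI}]. -/
/-! Write `ΔE_X = tr[(ρ' - ρ)X]`. A Gibbs state `σ = e^{-βH}/Z` has `log σ = -βH - log Z`, so
for every state `σ'` one gets `S(σ'‖σ) = S(σ) - S(σ') + β tr[(σ' - σ)H]`. Applied to the
marginals on each `A_k` and on `B` (a partial trace turns `tr[σ'_{A_k} H_{A_k}]` into
`tr[σ' H_{A_k}]`), the relative entropies become the changes of the marginal entropies plus
`Σ_k β_{A_k} ΔE_{A_k} + β_B Q`. The marginal entropy changes add up to `ΔI`, because the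
unitary evolution preserves `S(ρ)`. Since `H` commutes with `H_A + H_B`, energy is conserved,
`Σ_k ΔE_{A_k} + ΔE_{AI} + Q = 0`, and this absorbs the remaining terms carrying `β_A`. -/

open Matrix Kronecker Complex
open scoped ComplexOrder

noncomputable section

/-- Matrix logarithm of a Hermitian matrix via its spectral decomposition, with the
convention `log 0 = 0` on the spectrum (junk value `0` on non-Hermitian matrices). -/
def mlog {n : Type*} [Fintype n] [DecidableEq n] (A : Matrix n n ℂ) : Matrix n n ℂ :=
  if h : A.IsHermitian then
    (h.eigenvectorUnitary : Matrix n n ℂ) *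
      Matrix.diagonal (fun i => (Real.log (h.eigenvalues i) : ℂ)) *
      (h.eigenvectorUnitary : Matrix n n ℂ)ᴴ
  else 0

/-- Von Neumann entropy `S(ρ) = -tr(ρ log ρ)` (with the convention `0 log 0 = 0`). -/
def vN {n : Type*} [Fintype n] [DecidableEq n] (ρ : Matrix n n ℂ) : ℂ :=
  -(ρ * mlog ρ).trace

/-- Quantum relative entropy `S(ρ‖σ) = tr(ρ log ρ) - tr(ρ log σ)`. -/
def relEnt {n : Type*} [Fintype n] [DecidableEq n] (ρ σ : Matrix n n ℂ) : ℂ :=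
  (ρ * mlog ρ).trace - (ρ * mlog σ).trace

/-- The Gibbs state `e^{-βH}/tr(e^{-βH})` of a Hamiltonian `H` at inverse temperature `β`. -/
def gibbs {n : Type*} [Fintype n] [DecidableEq n] (β : ℝ) (H : Matrix n n ℂ) :
    Matrix n n ℂ :=
  (NormedSpace.exp ((-β : ℂ) • H)).trace⁻¹ • NormedSpace.exp ((-β : ℂ) • H)

/-- Unitary (Schrödinger) evolution `ρ(t) = e^{-iHt} ρ e^{iHt}` (with `ħ = 1`). -/
def evolve {n : Type*} [Fintype n] [DecidableEq n] (H ρ : Matrix n n ℂ) (t : ℝ) :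
    Matrix n n ℂ :=
  NormedSpace.exp ((-(I * t)) • H) * ρ * NormedSpace.exp ((I * t) • H)

/-- Reduced density matrix on the first factor (partial trace over the second). -/
def redA {m n : Type*} [Fintype m] [Fintype n]
    (ρ : Matrix (m × n) (m × n) ℂ) : Matrix m m ℂ :=
  Matrix.of fun i j => ∑ k, ρ (i, k) (j, k)

/-- Reduced density matrix on the second factor (partial trace over the first). -/
def redB {m n : Type*} [Fintype m] [Fintype n]
    (ρ : Matrix (m × n) (m × n) ℂ) : Matrix n n ℂ :=
  Matrix.of fun i j => ∑ k, ρ (k, i) (k, j)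

/-- Bipartite mutual information `I_{A:B}(ϱ) = S(ϱ_A) + S(ϱ_B) - S(ϱ)`. -/
def mutInfo {m n : Type*} [Fintype m] [DecidableEq m] [Fintype n] [DecidableEq n]
    (ρ : Matrix (m × n) (m × n) ℂ) : ℂ :=
  vN (redA ρ) + vN (redB ρ) - vN ρ

section Multipartite

variable {N : ℕ} {α : Fin N → Type*} [∀ k, Fintype (α k)] [∀ k, DecidableEq (α k)]
  {τ : Type*} [Fintype τ] [DecidableEq τ]

/-- Embedding of an operator on the subsystem `A_k` into the joint space
`(⊗_k H_{A_k}) ⊗ H_B` (identity on all other factors). -/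
def embAk (k : Fin N) (M : Matrix (α k) (α k) ℂ) :
    Matrix ((∀ j, α j) × τ) ((∀ j, α j) × τ) ℂ :=
  Matrix.of fun p q =>
    M (p.1 k) (q.1 k) *
      (if (∀ j, j ≠ k → p.1 j = q.1 j) ∧ p.2 = q.2 then 1 else 0)

/-- Embedding of an operator on the whole `A` system `⊗_k H_{A_k}` into the joint space. -/
def embA (M : Matrix (∀ j, α j) (∀ j, α j) ℂ) :
    Matrix ((∀ j, α j) × τ) ((∀ j, α j) × τ) ℂ :=
  Matrix.of fun p q => M p.1 q.1 * (if p.2 = q.2 then 1 else 0)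

/-- Embedding of an operator on the `B` system into the joint space. -/
def embB (M : Matrix τ τ ℂ) :
    Matrix ((∀ j, α j) × τ) ((∀ j, α j) × τ) ℂ :=
  Matrix.of fun p q => M p.2 q.2 * (if p.1 = q.1 then 1 else 0)

/-- Reduced density matrix on the subsystem `A_k` (partial trace over everything else). -/
def rdmAk (k : Fin N) (ρ : Matrix ((∀ j, α j) × τ) ((∀ j, α j) × τ) ℂ) :
    Matrix (α k) (α k) ℂ :=
  Matrix.of fun a b => ∑ g : ∀ j, α j, ∑ y : τ,
    if g k = a then ρ (g, y) (Function.update g k b, y) else 0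

/-- Reduced density matrix on the `B` system (partial trace over all `A` subsystems). -/
def rdmB (ρ : Matrix ((∀ j, α j) × τ) ((∀ j, α j) × τ) ℂ) : Matrix τ τ ℂ :=
  Matrix.of fun x y => ∑ g : ∀ j, α j, ρ (g, x) (g, y)

/-- Multipartite mutual information `I(ϱ) = Σ_k S(ϱ_{A_k}) + S(ϱ_B) - S(ϱ)` among the
subsystems `A_1, …, A_N, B`. -/
def multiMutInfo (ρ : Matrix ((∀ j, α j) × τ) ((∀ j, α j) × τ) ℂ) : ℂ :=
  (∑ k, vN (rdmAk k ρ)) + vN (rdmB ρ) - vN ρ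

end Multipartite

section MatrixFunctions

-- Statements below do not involve a norm; one is needed only to use the `CFC.log` API.
open scoped Matrix.Norms.L2Operator

variable {n : Type*} [Fintype n] [DecidableEq n]

lemma mlog_eq_log {A : Matrix n n ℂ} (hA : A.IsHermitian) : mlog A = CFC.log A := by
  rw [mlog, dif_pos hA, CFC.log, hA.cfc_eq, Matrix.IsHermitian.cfc]
  rfl

lemma mlog_conj_unitary {U A : Matrix n n ℂ} (hU : U ∈ unitary (Matrix n n ℂ))
    (hA : A.IsHermitian) : mlog (U * A * star U) = U * mlog A * star U := by
  have hUA : (U * A * star U).IsHermitian := hA.isSelfAdjoint.conjugate U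
  rw [mlog_eq_log hUA, mlog_eq_log hA, CFC.log, CFC.log]
  exact (StarAlgHomClass.map_cfc (Unitary.conjStarAlgAut ℂ _ ⟨U, hU⟩) Real.log A
    (Matrix.finite_real_spectrum.continuousOn _)
    (show Continuous fun X => U * X * star U by fun_prop)).symm

lemma trace_conj_unitary {U : Matrix n n ℂ} (hU : U ∈ unitary (Matrix n n ℂ))
    (A : Matrix n n ℂ) : (U * A * star U).trace = A.trace := by
  rw [Matrix.trace_mul_cycle, Unitary.star_mul_self_of_mem hU, Matrix.one_mul]

lemma vN_conj_unitary {U A : Matrix n n ℂ} (hU : U ∈ unitary (Matrix n n ℂ))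
    (hA : A.IsHermitian) : vN (U * A * star U) = vN A := by
  have h : U * A * star U * (U * mlog A * star U) = U * (A * mlog A) * star U := by
    simp only [Matrix.mul_assoc, ← Matrix.mul_assoc (star U), Unitary.star_mul_self_of_mem hU,
      Matrix.one_mul]
  rw [vN, vN, mlog_conj_unitary hU hA, h, trace_conj_unitary hU]

lemma exists_mlog_gibbs_eq [Nonempty n] (β : ℝ) {H : Matrix n n ℂ} (hH : H.IsHermitian) :
    ∃ c : ℂ, mlog (gibbs β H) = (-β : ℂ) • H + c • 1 := by
  set B : Matrix n n ℂ := (-β) • H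
  have hB : IsSelfAdjoint B := (IsSelfAdjoint.all _).smul hH.isSelfAdjoint
  have hB' : (-β : ℂ) • H = B := by rw [← Complex.ofReal_neg, Complex.coe_smul]
  set E := NormedSpace.exp B
  have hE : cfc Real.exp B = E := CFC.real_exp_eq_normedSpace_exp
  have hEherm : E.IsHermitian := hE ▸ cfc_predicate _ _
  have hEspec : ∀ x ∈ spectrum ℝ E, 0 < x := by
    rw [← hE, cfc_map_spectrum Real.exp B]
    rintro _ ⟨x, -, rfl⟩
    exact Real.exp_pos x
  set Z := ∑ i, hEherm.eigenvalues i
  have hZ : 0 < Z := Finset.sum_pos (fun i _ => hEspec _ (hEherm.eigenvalues_mem_spectrum_real i))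
    Finset.univ_nonempty
  have hgibbs : gibbs β H = Z⁻¹ • E := by
    rw [gibbs, hB', hEherm.trace_eq_sum_eigenvalues, ← Complex.coe_smul]
    push_cast [Z]
    rfl
  refine ⟨Real.log Z⁻¹, ?_⟩
  have hherm : (gibbs β H).IsHermitian := by
    rw [hgibbs]; exact (IsSelfAdjoint.all _).smul hEherm.isSelfAdjoint
  rw [mlog_eq_log hherm, hgibbs,
    CFC.log_smul _ (fun x hx => (hEspec x hx).ne') (inv_ne_zero hZ.ne'), CFC.log_exp B,
    Algebra.algebraMap_eq_smul_one, hB', Complex.coe_smul, add_comm]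

lemma relEnt_eq_of_eq_gibbs {σ' σ H : Matrix n n ℂ} {β : ℝ} (hH : H.IsHermitian)
    (hσ : σ = gibbs β H) (hσ'tr : σ'.trace = 1) (hσtr : σ.trace = 1) :
    relEnt σ' σ = vN σ - vN σ' + β * ((σ' * H).trace - (σ * H).trace) := by
  have : Nonempty n := by
    by_contra hn
    simp [not_nonempty_iff.mp hn, Matrix.trace] at hσtr
  obtain ⟨c, hc⟩ := exists_mlog_gibbs_eq β hH
  have trace_mul_log (τ : Matrix n n ℂ) (hτ : τ.trace = 1) :
      (τ * mlog σ).trace = -β * (τ * H).trace + c := by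
    rw [hσ, hc, Matrix.mul_add, Matrix.trace_add, Matrix.mul_smul, Matrix.mul_smul,
      Matrix.trace_smul, Matrix.trace_smul, Matrix.mul_one, hτ, smul_eq_mul, smul_eq_mul, mul_one]
  rw [relEnt, vN, vN, trace_mul_log σ' hσ'tr, trace_mul_log σ hσtr]
  ring

lemma exp_smul_mul_exp_neg_smul (c : ℂ) (H : Matrix n n ℂ) :
    NormedSpace.exp (c • H) * NormedSpace.exp ((-c) • H) = 1 := by
  rw [← Matrix.exp_add_of_commute _ _ (((Commute.refl H).smul_left c).smul_right (-c)),
    ← add_smul, add_neg_cancel, zero_smul, NormedSpace.exp_zero]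

lemma trace_evolve_mul_of_commute {H K : Matrix n n ℂ} (hHK : Commute H K)
    (ρ : Matrix n n ℂ) (t : ℝ) : (evolve H ρ t * K).trace = (ρ * K).trace := by
  have hK : Commute (NormedSpace.exp ((I * t) • H)) K := (hHK.smul_left _).exp_left
  rw [evolve, Matrix.mul_assoc, hK.eq, ← Matrix.mul_assoc, Matrix.trace_mul_cycle,
    ← Matrix.mul_assoc, exp_smul_mul_exp_neg_smul, Matrix.one_mul]

lemma trace_evolve (H ρ : Matrix n n ℂ) (t : ℝ) : (evolve H ρ t).trace = ρ.trace := by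
  simpa using trace_evolve_mul_of_commute (Commute.one_right H) ρ t

lemma evolve_eq_conj_unitary {H : Matrix n n ℂ} (hH : H.IsHermitian) (ρ : Matrix n n ℂ)
    (t : ℝ) : ∃ U ∈ unitary (Matrix n n ℂ), evolve H ρ t = U * ρ * star U := by
  have hstar : star (NormedSpace.exp ((-(I * t)) • H)) = NormedSpace.exp ((I * t) • H) := by
    rw [NormedSpace.star_exp, star_smul, hH.isSelfAdjoint.star_eq]
    simp
  refine ⟨_, Unitary.mem_iff.mpr ⟨?_, ?_⟩, by rw [evolve, hstar]⟩ <;> rw [hstar]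
  · exact exp_smul_mul_exp_neg_smul _ H
  · simpa using exp_smul_mul_exp_neg_smul (-(I * t)) H

lemma vN_evolve {H ρ : Matrix n n ℂ} (hH : H.IsHermitian) (hρ : ρ.IsHermitian) (t : ℝ) :
    vN (evolve H ρ t) = vN ρ := by
  obtain ⟨U, hU, h⟩ := evolve_eq_conj_unitary hH ρ t
  rw [h, vN_conj_unitary hU hρ]

end MatrixFunctions

section Embeddings

variable {N : ℕ} {α : Fin N → Type*} {τ : Type*}

lemma isHermitian_embA [DecidableEq τ] {M : Matrix (∀ j, α j) (∀ j, α j) ℂ}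
    (hM : M.IsHermitian) : (embA (τ := τ) M).IsHermitian := by
  ext p q
  simp only [Matrix.conjTranspose_apply, embA, Matrix.of_apply, star_mul', hM.apply,
    apply_ite star, star_one, star_zero]
  grind

lemma isHermitian_embB [∀ k, DecidableEq (α k)] {M : Matrix τ τ ℂ} (hM : M.IsHermitian) :
    (embB (α := α) M).IsHermitian := by
  ext p q
  simp only [Matrix.conjTranspose_apply, embB, Matrix.of_apply, star_mul', hM.apply,
    apply_ite star, star_one, star_zero]
  grind

variable [∀ k, DecidableEq (α k)] [DecidableEq τ]

lemma isHermitian_embAk (k : Fin N) {M : Matrix (α k) (α k) ℂ} (hM : M.IsHermitian) :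
    (embAk (τ := τ) k M).IsHermitian := by
  ext p q
  simp only [Matrix.conjTranspose_apply, embAk, Matrix.of_apply, star_mul', hM.apply,
    apply_ite star, star_one, star_zero]
  grind

lemma embAk_one (k : Fin N) : embAk (τ := τ) k (1 : Matrix (α k) (α k) ℂ) = 1 := by
  ext p q
  simp only [embAk, Matrix.of_apply, Matrix.one_apply, Prod.ext_iff, funext_iff,
    ite_zero_mul_ite_zero, mul_one]
  grind

lemma embB_one : embB (α := α) (1 : Matrix τ τ ℂ) = 1 := by
  ext p q
  simp only [embB, Matrix.of_apply, Matrix.one_apply, Prod.ext_iff, ite_zero_mul_ite_zero,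
    mul_one, and_comm]

end Embeddings

section PartialTrace

variable {N : ℕ} {α : Fin N → Type*} [∀ k, Fintype (α k)] [∀ k, DecidableEq (α k)]
  {τ : Type*} [Fintype τ]

lemma sum_ite_forall_ne_eq_sum_update (k : Fin N) (g : ∀ j, α j) (F : (∀ j, α j) → ℂ) :
    ∑ h : ∀ j, α j, (if ∀ j, j ≠ k → h j = g j then F h else 0)
      = ∑ b : α k, F (Function.update g k b) := by
  have himage : Finset.univ.filter (fun h : ∀ j, α j => ∀ j, j ≠ k → h j = g j)
      = Finset.univ.image (Function.update g k) := by
    ext h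
    simp [eq_comm (b := h), Function.eq_update_iff]
  rw [← Finset.sum_filter, himage,
    Finset.sum_image fun _ _ _ _ h => Function.update_injective g k h]

lemma trace_rdmB_mul (σ : Matrix ((∀ j, α j) × τ) ((∀ j, α j) × τ) ℂ)
    (M : Matrix τ τ ℂ) : (rdmB σ * M).trace = (σ * embB (α := α) M).trace := by
  simp only [Matrix.trace, Matrix.diag, Matrix.mul_apply, rdmB, embB, Matrix.of_apply,
    Fintype.sum_prod_type, Finset.sum_mul, mul_ite, mul_one, mul_zero, Finset.sum_ite_irrel,
    Finset.sum_const_zero, Finset.sum_ite_eq', Finset.mem_univ, if_true]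
  exact (Finset.sum_congr rfl fun _ _ => Finset.sum_comm).trans Finset.sum_comm

variable [DecidableEq τ]

lemma trace_rdmAk_mul (k : Fin N) (σ : Matrix ((∀ j, α j) × τ) ((∀ j, α j) × τ) ℂ)
    (M : Matrix (α k) (α k) ℂ) :
    (rdmAk k σ * M).trace = (σ * embAk k M).trace := by
  simp only [Matrix.trace, Matrix.diag, Matrix.mul_apply, rdmAk, embAk, Matrix.of_apply,
    Fintype.sum_prod_type, Finset.sum_mul, ite_mul, zero_mul, mul_ite, mul_zero, mul_one, ite_and,
    Finset.sum_ite_irrel, Finset.sum_const_zero, Finset.sum_ite_eq', Finset.mem_univ, if_true,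
    sum_ite_forall_ne_eq_sum_update, Function.update_self]
  calc _ = ∑ b : α k, ∑ g : ∀ j, α j, ∑ y : τ,
        σ (g, y) (Function.update g k b, y) * M b (g k) := by
        rw [Finset.sum_comm]
        refine Finset.sum_congr rfl fun b _ => ?_
        rw [Finset.sum_comm]
        simp only [Finset.sum_ite_eq, Finset.mem_univ, if_true]
    _ = _ := Finset.sum_comm.trans (Finset.sum_congr rfl fun _ _ => Finset.sum_comm)

lemma trace_rdmAk (k : Fin N) (σ : Matrix ((∀ j, α j) × τ) ((∀ j, α j) × τ) ℂ) :
    (rdmAk k σ).trace = σ.trace := by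
  simpa [embAk_one] using trace_rdmAk_mul k σ 1

lemma trace_rdmB (σ : Matrix ((∀ j, α j) × τ) ((∀ j, α j) × τ) ℂ) :
    (rdmB σ).trace = σ.trace := by
  simpa [embB_one] using trace_rdmB_mul σ 1

lemma relEnt_rdmAk_of_eq_gibbs {k : Fin N}
    {σ' σ : Matrix ((∀ j, α j) × τ) ((∀ j, α j) × τ) ℂ} {β : ℝ} {M : Matrix (α k) (α k) ℂ}
    (hM : M.IsHermitian) (hσ : rdmAk k σ = gibbs β M)
    (hσ'tr : σ'.trace = 1) (hσtr : σ.trace = 1) :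
    relEnt (rdmAk k σ') (rdmAk k σ)
      = vN (rdmAk k σ) - vN (rdmAk k σ') + β * ((σ' - σ) * embAk k M).trace := by
  rw [relEnt_eq_of_eq_gibbs hM hσ ((trace_rdmAk k σ').trans hσ'tr)
    ((trace_rdmAk k σ).trans hσtr), Matrix.sub_mul, Matrix.trace_sub, trace_rdmAk_mul,
    trace_rdmAk_mul]

lemma relEnt_rdmB_of_eq_gibbs {σ' σ : Matrix ((∀ j, α j) × τ) ((∀ j, α j) × τ) ℂ}
    {β : ℝ} {M : Matrix τ τ ℂ} (hM : M.IsHermitian) (hσ : rdmB σ = gibbs β M)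
    (hσ'tr : σ'.trace = 1) (hσtr : σ.trace = 1) :
    relEnt (rdmB σ') (rdmB σ)
      = vN (rdmB σ) - vN (rdmB σ') + β * ((σ' - σ) * embB M).trace := by
  rw [relEnt_eq_of_eq_gibbs hM hσ ((trace_rdmB σ').trans hσ'tr) ((trace_rdmB σ).trans hσtr),
    Matrix.sub_mul, Matrix.trace_sub, trace_rdmB_mul, trace_rdmB_mul]

end PartialTrace

section Multipartite

variable {N : ℕ} {α : Fin N → Type*} [∀ k, Fintype (α k)] [∀ k, DecidableEq (α k)]
  {τ : Type*} [Fintype τ] [DecidableEq τ]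

theorem heat_transfer_equation_general
    (HAk : ∀ k : Fin N, Matrix (α k) (α k) ℂ) (hHAk : ∀ k, (HAk k).IsHermitian)
    (HAI : Matrix (∀ j, α j) (∀ j, α j) ℂ) (hHAI : HAI.IsHermitian)
    (HB : Matrix τ τ ℂ) (hHB : HB.IsHermitian)
    (HI : Matrix ((∀ j, α j) × τ) ((∀ j, α j) × τ) ℂ) (hHI : HI.IsHermitian)
    (HA : Matrix ((∀ j, α j) × τ) ((∀ j, α j) × τ) ℂ)
    (hHA : HA = (∑ k, embAk k (HAk k)) + embA HAI)
    (hcomm : ⁅HI, HA + embB HB⁆ = 0)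
    (H : Matrix ((∀ j, α j) × τ) ((∀ j, α j) × τ) ℂ) (hH : H = HA + embB HB + HI)
    (ρ : Matrix ((∀ j, α j) × τ) ((∀ j, α j) × τ) ℂ)
    (hρ : ρ.PosSemidef) (hρtr : ρ.trace = 1)
    (βAk : Fin N → ℝ) (βB : ℝ)
    (hGibbsA : ∀ k, rdmAk k ρ = gibbs (βAk k) (HAk k))
    (hGibbsB : rdmB ρ = gibbs βB HB)
    (βA : ℝ)
    (t : ℝ) (ρ' : Matrix ((∀ j, α j) × τ) ((∀ j, α j) × τ) ℂ) (hρ' : ρ' = evolve H ρ t)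
    (Q : ℂ) (hQ : Q = ((ρ' - ρ) * embB HB).trace) :
    ((βB - βA : ℝ) : ℂ) * Q
      = (∑ k, relEnt (rdmAk k ρ') (rdmAk k ρ))
        + relEnt (rdmB ρ') (rdmB ρ)
        + (multiMutInfo ρ' - multiMutInfo ρ)
        + (∑ k, ((βA - βAk k : ℝ) : ℂ) * ((ρ' - ρ) * embAk k (HAk k)).trace)
        + (βA : ℂ) * ((ρ' - ρ) * embA HAI).trace := by
  subst hQ
  have hHAherm : HA.IsHermitian := by
    rw [hHA]
    exact (isSelfAdjoint_sum _ fun k _ => isHermitian_embAk k (hHAk k)).add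
      (isHermitian_embA hHAI)
  have hHherm : H.IsHermitian := by
    rw [hH]
    exact (hHAherm.add (isHermitian_embB hHB)).add hHI
  have hρ'tr : ρ'.trace = 1 := by rw [hρ', trace_evolve, hρtr]
  have hvN : vN ρ' = vN ρ := by rw [hρ', vN_evolve hHherm hρ.1]
  have hHK : Commute H (HA + embB HB) :=
    hH ▸ (Commute.refl _).add_left (commute_iff_lie_eq.mpr hcomm)
  have henergy : ((ρ' - ρ) * (HA + embB HB)).trace = 0 := by
    rw [Matrix.sub_mul, Matrix.trace_sub, hρ', trace_evolve_mul_of_commute hHK, sub_self]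
  rw [hHA, Matrix.mul_add, Matrix.mul_add, Matrix.trace_add, Matrix.trace_add, Finset.mul_sum,
    Matrix.trace_sum] at henergy
  rw [Finset.sum_congr rfl fun k _ => relEnt_rdmAk_of_eq_gibbs (hHAk k) (hGibbsA k) hρ'tr hρtr,
    relEnt_rdmB_of_eq_gibbs hHB hGibbsB hρ'tr hρtr, multiMutInfo, multiMutInfo, hvN]
  simp only [Finset.sum_add_distrib, Finset.sum_sub_distrib, ofReal_sub, sub_mul (α := ℂ),
    ← Finset.mul_sum]
  linear_combination (-(βA : ℂ)) * henergy

/-- **heat transfer equation, Eq. (5).** With `A` composed of `N` subsystems,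
`H_A = Σ_k H_{A_k} + H_{AI}`, the heat-transfer condition `[H_I, H_A + H_B] = 0`, an initial
state `ρ` whose reduced states on every `A_k` and on `B` are Gibbs at inverse temperatures
`β_{A_k}`, `β_B`, and `β_A = min_k β_{A_k}`, the heat transfer `Q = tr[(ρ' - ρ)H_B]`,
`ρ' = e^{-iHt} ρ e^{iHt}`, satisfies
`(β_B - β_A)Q = Σ_k S(ρ'_{A_k}‖ρ_{A_k}) + S(ρ'_B‖ρ_B) + ΔI_{AB} + ΔT_A + ΔJ_A`. -/
theorem heat_transfer_equation
    (HAk : ∀ k : Fin N, Matrix (α k) (α k) ℂ) (hHAk : ∀ k, (HAk k).IsHermitian)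
    (HAI : Matrix (∀ j, α j) (∀ j, α j) ℂ) (hHAI : HAI.IsHermitian)
    (HB : Matrix τ τ ℂ) (hHB : HB.IsHermitian)
    (HI : Matrix ((∀ j, α j) × τ) ((∀ j, α j) × τ) ℂ) (hHI : HI.IsHermitian)
    (HA : Matrix ((∀ j, α j) × τ) ((∀ j, α j) × τ) ℂ)
    (hHA : HA = (∑ k, embAk k (HAk k)) + embA HAI)
    (hcomm : ⁅HI, HA + embB HB⁆ = 0)
    (H : Matrix ((∀ j, α j) × τ) ((∀ j, α j) × τ) ℂ) (hH : H = HA + embB HB + HI)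
    (ρ : Matrix ((∀ j, α j) × τ) ((∀ j, α j) × τ) ℂ)
    (hρ : ρ.PosSemidef) (hρtr : ρ.trace = 1)
    (βAk : Fin N → ℝ) (βB : ℝ)
    (hGibbsA : ∀ k, rdmAk k ρ = gibbs (βAk k) (HAk k))
    (hGibbsB : rdmB ρ = gibbs βB HB)
    (βA : ℝ) (hβA_le : ∀ k, βA ≤ βAk k) (hβA_mem : ∃ k, βAk k = βA)
    (t : ℝ) (ρ' : Matrix ((∀ j, α j) × τ) ((∀ j, α j) × τ) ℂ) (hρ' : ρ' = evolve H ρ t)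
    (Q : ℂ) (hQ : Q = ((ρ' - ρ) * embB HB).trace) :
    ((βB - βA : ℝ) : ℂ) * Q
      = (∑ k, relEnt (rdmAk k ρ') (rdmAk k ρ))
        + relEnt (rdmB ρ') (rdmB ρ)
        + (multiMutInfo ρ' - multiMutInfo ρ)
        + (∑ k, ((βA - βAk k : ℝ) : ℂ) * ((ρ' - ρ) * embAk k (HAk k)).trace)
        + (βA : ℂ) * ((ρ' - ρ) * embA HAI).trace :=
  heat_transfer_equation_general HAk hHAk HAI hHAI HB hHB HI hHI HA hHA hcomm H hH ρ hρ hρtr βAk βB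
    hGibbsA hGibbsB βA t ρ' hρ' Q hQ

end Multipartite
end
end

section
/- Decomposition of the cross term into intra- and intersystem coherence contributions. Let qubits A_m, A_k, B_l have pair interactions H_{ml} = c_{ml}σ^−_{A_m}σ^+_{B_l} + h.c. and H_{kl} = c_{kl}σ^−_{A_k}σ^+_{B_l} + h.c. (m ≠ k), and suppose the reduced state of ρ on the triple decomposes as ρ_{A_mA_kB_l} = ρ_{A_mA_k} ⊗ ρ_{B_l} + Σ_{a∈{x,y,z}} χ^a_A ⊗ σ^a_{B_l}, where ρ_{B_l} = e^{β_{B_l}ω_{B_l}σ^z/2}/(2cosh(β_{B_l}ω_{B_l}/2)) is a Gibbs state, ρ_{A_mA_k} is the reduced state on {A_m, A_k}, and tr(χ^a_A) = 0. Then −tr( ρ [H_{ml}, [H_{kl}, H_{B0}]] ) = ω_{B_l} [ tanh(β_{B_l}ω_{B_l}/2) · tr( ρ_{A_mA_k}( c_{ml}c̄_{kl} σ^−_{A_m}σ^+_{A_k} + h.c. ) ) + 2 tr( χ^z_A ( c_{ml}c̄_{kl} σ^−_{A_m}σ^+_{A_k} + h.c. ) ) ], where H_{B0} contains the term −(ω_{B_l}/2)σ^z_{B_l}.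 -/
open Matrix Kronecker Complex
open scoped ComplexOrder

noncomputable section

/-- Pauli X. -/
def σx : Matrix (Fin 2) (Fin 2) ℂ := !![0, 1; 1, 0]
/-- Pauli Y. -/
def σy : Matrix (Fin 2) (Fin 2) ℂ := !![0, -I; I, 0]
/-- Pauli Z. -/
def σz : Matrix (Fin 2) (Fin 2) ℂ := !![1, 0; 0, -1]
/-- Raising operator `σ⁺ = (σˣ + iσʸ)/2`. -/
def σp : Matrix (Fin 2) (Fin 2) ℂ := !![0, 1; 0, 0]
/-- Lowering operator `σ⁻ = (σˣ - iσʸ)/2`. -/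
def σm : Matrix (Fin 2) (Fin 2) ℂ := !![0, 0; 1, 0]

/-- Tensor product of a family of single-qubit operators, as a matrix on `⊗_{i : ι} ℂ²`. -/
def tpow {ι : Type*} [Fintype ι] (M : ι → Matrix (Fin 2) (Fin 2) ℂ) :
    Matrix (ι → Fin 2) (ι → Fin 2) ℂ :=
  Matrix.of fun f g => ∏ i, M i (f i) (g i)

/-- The single-qubit operator `M` acting on qubit `u`, tensored with the identity elsewhere. -/
def opAt {ι : Type*} [Fintype ι] [DecidableEq ι] (u : ι) (M : Matrix (Fin 2) (Fin 2) ℂ) :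
    Matrix (ι → Fin 2) (ι → Fin 2) ℂ :=
  tpow fun i => if i = u then M else 1

/-- The single-qubit Gibbs state `e^{βωσᶻ/2}/(2cosh(βω/2))` of the Hamiltonian `-(ω/2)σᶻ`
at inverse temperature `β`. -/
def gibbsQubit (β ω : ℝ) : Matrix (Fin 2) (Fin 2) ℂ :=
  ((2 * Real.cosh (β * ω / 2) : ℝ) : ℂ)⁻¹ •
    !![(Real.exp (β * ω / 2) : ℂ), 0; 0, (Real.exp (-(β * ω) / 2) : ℂ)]

/-- Reduced density matrix of a multi-qubit state on the single qubit `u`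
(partial trace over all other qubits). -/
def rdm1 {ι : Type*} [Fintype ι] [DecidableEq ι] (u : ι)
    (ρ : Matrix (ι → Fin 2) (ι → Fin 2) ℂ) : Matrix (Fin 2) (Fin 2) ℂ :=
  Matrix.of fun a b => ∑ g : ι → Fin 2, if g u = a then ρ g (Function.update g u b) else 0

/-- Reduced density matrix of a multi-qubit state on the (distinct) pair of qubits `u, v`
(partial trace over all other qubits). -/
def rdm2 {ι : Type*} [Fintype ι] [DecidableEq ι] (u v : ι)
    (ρ : Matrix (ι → Fin 2) (ι → Fin 2) ℂ) : Matrix (Fin 2 × Fin 2) (Fin 2 × Fin 2) ℂ :=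
  Matrix.of fun p q => ∑ g : ι → Fin 2,
    if g u = p.1 ∧ g v = p.2 then
      ρ g (Function.update (Function.update g u q.1) v q.2) else 0

/-- Reduced density matrix of a multi-qubit state on the (distinct) triple of qubits `u, v, w`
(partial trace over all other qubits). -/
def rdm3 {ι : Type*} [Fintype ι] [DecidableEq ι] (u v w : ι)
    (ρ : Matrix (ι → Fin 2) (ι → Fin 2) ℂ) :
    Matrix ((Fin 2 × Fin 2) × Fin 2) ((Fin 2 × Fin 2) × Fin 2) ℂ :=
  Matrix.of fun p q => ∑ g : ι → Fin 2,
    if g u = p.1.1 ∧ g v = p.1.2 ∧ g w = p.2 then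
      ρ g (Function.update (Function.update (Function.update g u q.1.1) v q.1.2) w q.2) else 0

/-! Only the term of `H_{B0}` on `B_l` fails to commute with `H_{kl}`, so the double commutator
lives on the three qubits `A_m, A_k, B_l`: `[H_{kl}, H_{B0}] = ω(c_{kl}σ⁻_{A_k}σ⁺_{B_l} − h.c.)`
and `[H_{ml}, [H_{kl}, H_{B0}]] = −ω(c_{ml}c̄_{kl} σ⁻_{A_m}σ⁺_{A_k}σᶻ_{B_l} + h.c.)`. The
expectation of an operator on three qubits only sees the reduced state `ρ_{A_mA_kB_l}`, and
pairing its decomposition with `X ⊗ σᶻ` picks out `tr(ρ_{B_l}σᶻ) = tanh(βω/2)` and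
`tr(σᵃσᶻ) = 2δ_{az}`. -/

theorem lie_sum_smul_eq_of_commute {R A J : Type*} [CommRing R] [Ring A] [Algebra R A] [Fintype J]
    {H : A} {X : J → A} (c : J → R) (j₀ : J) (h : ∀ j ≠ j₀, Commute H (X j)) :
    ⁅H, ∑ j, c j • X j⁆ = c j₀ • ⁅H, X j₀⁆ := by
  simp only [Ring.lie_def, Finset.mul_sum, Finset.sum_mul, mul_smul_comm, smul_mul_assoc,
    ← Finset.sum_sub_distrib, ← smul_sub]
  exact Finset.sum_eq_single j₀ (fun j _ hj => by rw [(h j hj).eq, sub_self, smul_zero])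
    (fun h₀ => absurd (Finset.mem_univ j₀) h₀)

section TensorOps

variable {ι : Type*} [Fintype ι] [DecidableEq ι]

theorem tpow_mul (M N : ι → Matrix (Fin 2) (Fin 2) ℂ) : tpow M * tpow N = tpow (M * N) := by
  ext f g
  simp only [tpow, mul_apply, of_apply, Pi.mul_apply, Finset.prod_univ_sum, Fintype.piFinset_univ,
    Finset.prod_mul_distrib]

omit [DecidableEq ι] in
theorem tpow_one : tpow (1 : ι → Matrix (Fin 2) (Fin 2) ℂ) = 1 := by
  ext f g
  simp only [tpow, of_apply, Pi.one_apply, one_apply, Fintype.prod_boole, funext_iff]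

theorem opAt_one (u : ι) : opAt u (1 : Matrix (Fin 2) (Fin 2) ℂ) = 1 := by
  simp only [opAt, ite_self]
  exact tpow_one

theorem opAt_apply (u : ι) (M : Matrix (Fin 2) (Fin 2) ℂ) (f g : ι → Fin 2) :
    opAt u M f g
      = M (f u) (g u) * ∏ i ∈ Finset.univ.erase u, (1 : Matrix (Fin 2) (Fin 2) ℂ) (f i) (g i) := by
  rw [opAt, tpow, of_apply, ← Finset.mul_prod_erase _ _ (Finset.mem_univ u), if_pos rfl]
  congr 1
  exact Finset.prod_congr rfl fun i hi => by rw [if_neg (Finset.ne_of_mem_erase hi)]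

theorem opAt_add (u : ι) (M N : Matrix (Fin 2) (Fin 2) ℂ) :
    opAt u (M + N) = opAt u M + opAt u N := by
  ext f g; simp only [opAt_apply, Matrix.add_apply, add_mul]

theorem opAt_smul (u : ι) (c : ℂ) (M : Matrix (Fin 2) (Fin 2) ℂ) :
    opAt u (c • M) = c • opAt u M := by
  ext f g; simp only [opAt_apply, Matrix.smul_apply, smul_eq_mul, mul_assoc]

theorem opAt_neg (u : ι) (M : Matrix (Fin 2) (Fin 2) ℂ) : opAt u (-M) = -opAt u M := by
  rw [← neg_one_smul ℂ M, opAt_smul, neg_one_smul]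

theorem opAt_sub (u : ι) (M N : Matrix (Fin 2) (Fin 2) ℂ) :
    opAt u (M - N) = opAt u M - opAt u N := by
  rw [sub_eq_add_neg, opAt_add, opAt_neg, sub_eq_add_neg]

theorem opAt_mul_opAt_self (u : ι) (M N : Matrix (Fin 2) (Fin 2) ℂ) :
    opAt u M * opAt u N = opAt u (M * N) := by
  rw [opAt, opAt, opAt, tpow_mul]
  congr 1; funext i
  rw [Pi.mul_apply]; split_ifs <;> simp

theorem commute_opAt_opAt {u v : ι} (h : u ≠ v) (M N : Matrix (Fin 2) (Fin 2) ℂ) :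
    Commute (opAt u M) (opAt v N) := by
  rw [Commute, SemiconjBy, opAt, opAt, tpow_mul, tpow_mul]
  congr 1; funext i
  rw [Pi.mul_apply, Pi.mul_apply]
  by_cases hu : i = u <;> by_cases hv : i = v <;> simp_all

end TensorOps

section Pauli

theorem lie_σp_σz : ⁅σp, σz⁆ = (-2 : ℂ) • σp := by
  rw [Ring.lie_def]
  ext i j; fin_cases i <;> fin_cases j <;> norm_num [σp, σz, mul_apply, Fin.sum_univ_two]

theorem lie_σm_σz : ⁅σm, σz⁆ = (2 : ℂ) • σm := by
  rw [Ring.lie_def]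
  ext i j; fin_cases i <;> fin_cases j <;> norm_num [σm, σz, mul_apply, Fin.sum_univ_two]

theorem lie_σp_σm : ⁅σp, σm⁆ = σz := by
  rw [Ring.lie_def]
  ext i j; fin_cases i <;> fin_cases j <;> norm_num [σp, σm, σz, mul_apply, Fin.sum_univ_two]

theorem lie_σm_σp : ⁅σm, σp⁆ = -σz := by
  rw [Ring.lie_def]
  ext i j; fin_cases i <;> fin_cases j <;> norm_num [σp, σm, σz, mul_apply, Fin.sum_univ_two]

theorem trace_pauli_mul_σz (a : Fin 3) :
    (![σx, σy, σz] a * σz).trace = if a = 2 then 2 else 0 := by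
  fin_cases a <;> norm_num [σx, σy, σz, trace_fin_two, mul_apply, Fin.sum_univ_two, Fin.ext_iff]

theorem trace_gibbsQubit_mul_σz (β ω : ℝ) :
    (gibbsQubit β ω * σz).trace = ((Real.tanh (β * ω / 2) : ℝ) : ℂ) := by
  have hsub : (!![(Real.exp (β * ω / 2) : ℂ), 0; 0, (Real.exp (-(β * ω) / 2) : ℂ)] * σz).trace
      = ((Real.exp (β * ω / 2) - Real.exp (-(β * ω / 2)) : ℝ) : ℂ) := by
    norm_num [σz, trace_fin_two, mul_apply, Fin.sum_univ_two, neg_div, sub_eq_add_neg]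
  rw [gibbsQubit, smul_mul_assoc, trace_smul, hsub, smul_eq_mul, ← Complex.ofReal_inv,
    ← Complex.ofReal_mul, Real.tanh_eq_sinh_div_cosh, Real.sinh_eq]
  congr 1
  field_simp

theorem trace_kronecker_pauli_mul_kronecker_σz {n : Type*} [Fintype n]
    (R X : Matrix n n ℂ) (G : Matrix (Fin 2) (Fin 2) ℂ) (χ : Fin 3 → Matrix n n ℂ) :
    ((R ⊗ₖ G + ∑ a, χ a ⊗ₖ ![σx, σy, σz] a) * (X ⊗ₖ σz)).trace
      = (R * X).trace * (G * σz).trace + 2 * (χ 2 * X).trace := by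
  simp only [add_mul, Finset.sum_mul, trace_add, trace_sum, ← mul_kronecker_mul, trace_kronecker,
    trace_pauli_mul_σz, mul_ite, mul_zero, Finset.sum_ite_eq', Finset.mem_univ, if_true]
  ring

end Pauli

section ThreeSites

variable {ι : Type*} [Fintype ι] [DecidableEq ι] {u v w : ι}

def opAt3 (u v w : ι) (P Q R : Matrix (Fin 2) (Fin 2) ℂ) : Matrix (ι → Fin 2) (ι → Fin 2) ℂ :=
  opAt u P * opAt v Q * opAt w R

theorem opAt3_smul_right (c : ℂ) (P Q R : Matrix (Fin 2) (Fin 2) ℂ) :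
    opAt3 u v w P Q (c • R) = c • opAt3 u v w P Q R := by
  rw [opAt3, opAt3, opAt_smul, mul_smul_comm]

theorem opAt3_neg_right (P Q R : Matrix (Fin 2) (Fin 2) ℂ) :
    opAt3 u v w P Q (-R) = -opAt3 u v w P Q R := by
  rw [opAt3, opAt3, opAt_neg, mul_neg]

theorem opAt3_sub_right (P Q R R' : Matrix (Fin 2) (Fin 2) ℂ) :
    opAt3 u v w P Q (R - R') = opAt3 u v w P Q R - opAt3 u v w P Q R' := by
  rw [opAt3, opAt3, opAt3, opAt_sub, mul_sub]

theorem opAt3_zero_right (P Q : Matrix (Fin 2) (Fin 2) ℂ) : opAt3 u v w P Q 0 = 0 := by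
  simpa using opAt3_smul_right (u := u) (v := v) (w := w) 0 P Q 0

theorem commute_opAt3_opAt {x : ι} (hu : x ≠ u) (hv : x ≠ v) (hw : x ≠ w)
    (P Q R S : Matrix (Fin 2) (Fin 2) ℂ) : Commute (opAt3 u v w P Q R) (opAt x S) :=
  ((commute_opAt_opAt hu.symm P S).mul_left (commute_opAt_opAt hv.symm Q S)).mul_left
    (commute_opAt_opAt hw.symm R S)

variable (huv : u ≠ v) (huw : u ≠ w) (hvw : v ≠ w)
include huv huw hvw

theorem opAt3_mul_opAt3 (P Q R P' Q' R' : Matrix (Fin 2) (Fin 2) ℂ) :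
    opAt3 u v w P Q R * opAt3 u v w P' Q' R' = opAt3 u v w (P * P') (Q * Q') (R * R') := by
  simp only [opAt3, mul_assoc]
  rw [(commute_opAt_opAt huw.symm R P').left_comm, (commute_opAt_opAt huv.symm Q P').left_comm,
    ← mul_assoc (opAt u P), opAt_mul_opAt_self, (commute_opAt_opAt hvw.symm R Q').left_comm,
    ← mul_assoc (opAt v Q), opAt_mul_opAt_self, opAt_mul_opAt_self]

theorem lie_opAt3_opAt3 {P Q R P' Q' R' : Matrix (Fin 2) (Fin 2) ℂ}
    (hP : Commute P P') (hQ : Commute Q Q') :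
    ⁅opAt3 u v w P Q R, opAt3 u v w P' Q' R'⁆ = opAt3 u v w (P * P') (Q * Q') ⁅R, R'⁆ := by
  rw [Ring.lie_def, Ring.lie_def, opAt3_mul_opAt3 huv huw hvw, opAt3_mul_opAt3 huv huw hvw,
    hP.eq, hQ.eq, opAt3_sub_right]

theorem opAt3_eq_tpow (P Q R : Matrix (Fin 2) (Fin 2) ℂ) :
    opAt3 u v w P Q R
      = tpow fun i => if i = u then P else if i = v then Q else if i = w then R else 1 := by
  rw [opAt3, opAt, opAt, opAt, tpow_mul, tpow_mul]
  congr 1; funext i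
  simp only [Pi.mul_apply]
  split_ifs <;> simp_all

theorem lie_opAt3_flipFlop_σz (c : ℂ) :
    ⁅c • opAt3 u v w 1 σm σp + (starRingEnd ℂ) c • opAt3 u v w 1 σp σm, opAt3 u v w 1 1 σz⁆
      = (-2 : ℂ) • (c • opAt3 u v w 1 σm σp - (starRingEnd ℂ) c • opAt3 u v w 1 σp σm) := by
  -- The commutator Lie ring of an associative ring is not a global instance.
  let _ : LieRing (Matrix (ι → Fin 2) (ι → Fin 2) ℂ) := LieRing.ofAssociativeRing
  simp only [add_lie, smul_lie,
    lie_opAt3_opAt3 huv huw hvw (Commute.one_left _) (Commute.one_right _), lie_σp_σz, lie_σm_σz,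
    opAt3_smul_right, mul_one]
  module

theorem lie_opAt3_flipFlop_skewFlipFlop (c d : ℂ) :
    ⁅c • opAt3 u v w σm 1 σp + (starRingEnd ℂ) c • opAt3 u v w σp 1 σm,
      d • opAt3 u v w 1 σm σp - (starRingEnd ℂ) d • opAt3 u v w 1 σp σm⁆
      = -((c * (starRingEnd ℂ) d) • opAt3 u v w σm σp σz
          + ((starRingEnd ℂ) c * d) • opAt3 u v w σp σm σz) := by
  let _ : LieRing (Matrix (ι → Fin 2) (ι → Fin 2) ℂ) := LieRing.ofAssociativeRing
  simp only [add_lie, smul_lie, lie_sub, lie_smul,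
    lie_opAt3_opAt3 huv huw hvw (Commute.one_right _) (Commute.one_left _), (Commute.refl _).lie_eq,
    lie_σp_σm, lie_σm_σp, opAt3_zero_right, opAt3_neg_right, mul_one, one_mul]
  module

end ThreeSites

section PartialTrace

variable {ι α : Type*} [DecidableEq ι] {u v w : ι}

def updateTriple (g : ι → α) (u v w : ι) (q : (α × α) × α) : ι → α :=
  Function.update (Function.update (Function.update g u q.1.1) v q.1.2) w q.2

theorem updateTriple_eq_self {f g : ι → α} (h : ∀ i, i ≠ u → i ≠ v → i ≠ w → g i = f i) :
    updateTriple f u v w ((g u, g v), g w) = g := by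
  funext i
  by_cases hw : i = w; · subst hw; simp [updateTriple]
  by_cases hv : i = v; · subst hv; simp [updateTriple, hw]
  by_cases hu : i = u; · subst hu; simp [updateTriple, hw, hv]
  simp [updateTriple, hu, hv, hw, h i hu hv hw]

variable (huv : u ≠ v) (huw : u ≠ w) (hvw : v ≠ w)
include huv huw hvw

theorem updateTriple_apply_sites (g : ι → α) (q : (α × α) × α) :
    ((updateTriple g u v w q u, updateTriple g u v w q v), updateTriple g u v w q w) = q := by
  simp [updateTriple, huv, huw, hvw, Function.update_of_ne]

theorem updateTriple_injective (g : ι → α) : Function.Injective (updateTriple g u v w) :=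
  fun q q' h => by
    rw [← updateTriple_apply_sites huv huw hvw g q, ← updateTriple_apply_sites huv huw hvw g q', h]

end PartialTrace

section TraceAgainstReducedState

variable {ι : Type*} [Fintype ι] [DecidableEq ι] {u v w : ι}

theorem trace_rdm3_mul (ρ : Matrix (ι → Fin 2) (ι → Fin 2) ℂ)
    (K : Matrix ((Fin 2 × Fin 2) × Fin 2) ((Fin 2 × Fin 2) × Fin 2) ℂ) :
    (rdm3 u v w ρ * K).trace
      = ∑ g, ∑ q, ρ g (updateTriple g u v w q) * K q ((g u, g v), g w) := by
  have hsites : ∀ (g : ι → Fin 2) (p : (Fin 2 × Fin 2) × Fin 2),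
      (g u = p.1.1 ∧ g v = p.1.2 ∧ g w = p.2) ↔ ((g u, g v), g w) = p := by
    simp [Prod.ext_iff, and_assoc]
  simp only [trace, diag_apply, mul_apply, rdm3, of_apply, ite_mul, zero_mul, Finset.sum_mul,
    hsites]
  rw [Finset.sum_comm, Finset.sum_comm (γ := ι → Fin 2)]
  refine Finset.sum_congr rfl fun q _ => ?_
  rw [Finset.sum_comm]
  simp only [Finset.sum_ite_eq, Finset.mem_univ, if_true]
  rfl

variable (huv : u ≠ v) (huw : u ≠ w) (hvw : v ≠ w)
include huv huw hvw

theorem opAt3_apply_updateTriple (P Q R : Matrix (Fin 2) (Fin 2) ℂ) (f : ι → Fin 2)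
    (q : (Fin 2 × Fin 2) × Fin 2) :
    opAt3 u v w P Q R (updateTriple f u v w q) f = P q.1.1 (f u) * Q q.1.2 (f v) * R q.2 (f w) := by
  have hq := updateTriple_apply_sites huv huw hvw f q
  simp only [Prod.ext_iff] at hq
  rw [opAt3_eq_tpow huv huw hvw, tpow, of_apply]
  have : ∀ i, (if i = u then P else if i = v then Q else if i = w then R else 1)
      (updateTriple f u v w q i) (f i)
      = (if i = u then P q.1.1 (f u) else 1) * (if i = v then Q q.1.2 (f v) else 1)
        * (if i = w then R q.2 (f w) else 1) := by
    intro i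
    by_cases hu : i = u; · subst hu; simp [hq, huv, huw]
    by_cases hv : i = v; · subst hv; simp [hq, hvw, hu]
    by_cases hw : i = w; · subst hw; simp [hq, hu, hv]
    rw [if_neg hu, if_neg hv, if_neg hw, updateTriple, Function.update_of_ne hw,
      Function.update_of_ne hv, Function.update_of_ne hu]
    simp [hu, hv, hw]
  simp only [this, Finset.prod_mul_distrib, Finset.prod_ite_eq', Finset.mem_univ, if_true]

theorem opAt3_apply_eq_zero (P Q R : Matrix (Fin 2) (Fin 2) ℂ) {f g : ι → Fin 2} {i : ι}
    (hu : i ≠ u) (hv : i ≠ v) (hw : i ≠ w) (hi : g i ≠ f i) : opAt3 u v w P Q R g f = 0 := by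
  rw [opAt3_eq_tpow huv huw hvw, tpow, of_apply]
  exact Finset.prod_eq_zero (Finset.mem_univ i) (by simp [hu, hv, hw, hi])

theorem trace_mul_opAt3 (ρ : Matrix (ι → Fin 2) (ι → Fin 2) ℂ) (P Q R : Matrix (Fin 2) (Fin 2) ℂ) :
    (ρ * opAt3 u v w P Q R).trace
      = ∑ g, ∑ q, ρ g (updateTriple g u v w q) * (P q.1.1 (g u) * Q q.1.2 (g v) * R q.2 (g w)) := by
  simp only [trace, diag_apply, mul_apply]
  refine Finset.sum_congr rfl fun f _ => Eq.symm ?_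
  refine Finset.sum_of_injOn _ (updateTriple_injective huv huw hvw f).injOn
    (fun _ _ => Finset.mem_coe.2 (Finset.mem_univ _)) (fun g _ hg => ?_)
    (fun q _ => by rw [opAt3_apply_updateTriple huv huw hvw])
  by_contra hne
  have hoff : ∀ i, i ≠ u → i ≠ v → i ≠ w → g i = f i := fun i hu hv hw =>
    by_contra fun hi => hne (by rw [opAt3_apply_eq_zero huv huw hvw P Q R hu hv hw hi, mul_zero])
  exact hg ⟨_, Finset.mem_coe.2 (Finset.mem_univ _), updateTriple_eq_self hoff⟩

theorem trace_mul_opAt3_eq_trace_rdm3_mul (ρ : Matrix (ι → Fin 2) (ι → Fin 2) ℂ)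
    (P Q R : Matrix (Fin 2) (Fin 2) ℂ) :
    (ρ * opAt3 u v w P Q R).trace = (rdm3 u v w ρ * (P ⊗ₖ Q ⊗ₖ R)).trace := by
  rw [trace_mul_opAt3 huv huw hvw, trace_rdm3_mul]
  rfl

end TraceAgainstReducedState

theorem cross_term_coherence_decomposition_general
    (NA NB : ℕ) (m k : Fin NA) (hmk : m ≠ k) (l : Fin NB)
    (ωB : Fin NB → ℝ) (βBl : ℝ) (cml ckl : ℂ)
    (HB0 Hml Hkl : Matrix ((Fin NA ⊕ Fin NB) → Fin 2) ((Fin NA ⊕ Fin NB) → Fin 2) ℂ)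
    (hHB0 : HB0 = (-(1/2) : ℂ) • ∑ l', (ωB l' : ℂ) • opAt (Sum.inr l') σz)
    (hHml : Hml = cml • (opAt (Sum.inl m) σm * opAt (Sum.inr l) σp)
        + (starRingEnd ℂ) cml • (opAt (Sum.inl m) σp * opAt (Sum.inr l) σm))
    (hHkl : Hkl = ckl • (opAt (Sum.inl k) σm * opAt (Sum.inr l) σp)
        + (starRingEnd ℂ) ckl • (opAt (Sum.inl k) σp * opAt (Sum.inr l) σm))
    (ρ : Matrix ((Fin NA ⊕ Fin NB) → Fin 2) ((Fin NA ⊕ Fin NB) → Fin 2) ℂ)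
    (χ : Fin 3 → Matrix (Fin 2 × Fin 2) (Fin 2 × Fin 2) ℂ)
    (hdecomp : rdm3 (Sum.inl m) (Sum.inl k) (Sum.inr l) ρ
      = (rdm2 (Sum.inl m) (Sum.inl k) ρ) ⊗ₖ gibbsQubit βBl (ωB l)
        + ∑ a : Fin 3, (χ a) ⊗ₖ (![σx, σy, σz] a))
    (K : Matrix (Fin 2 × Fin 2) (Fin 2 × Fin 2) ℂ)
    (hK : K = (cml * (starRingEnd ℂ) ckl) • (σm ⊗ₖ σp)
        + ((starRingEnd ℂ) cml * ckl) • (σp ⊗ₖ σm)) :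
    -((ρ * ⁅Hml, ⁅Hkl, HB0⁆⁆).trace)
      = (ωB l : ℂ) *
          (((Real.tanh (βBl * ωB l / 2) : ℝ) : ℂ) * ((rdm2 (Sum.inl m) (Sum.inl k) ρ) * K).trace
            + 2 * ((χ 2) * K).trace) := by
  have huv : (Sum.inl m : Fin NA ⊕ Fin NB) ≠ Sum.inl k := Sum.inl_injective.ne hmk
  have huw : (Sum.inl m : Fin NA ⊕ Fin NB) ≠ Sum.inr l := Sum.inl_ne_inr
  have hvw : (Sum.inl k : Fin NA ⊕ Fin NB) ≠ Sum.inr l := Sum.inl_ne_inr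
  let _ : LieRing (Matrix ((Fin NA ⊕ Fin NB) → Fin 2) ((Fin NA ⊕ Fin NB) → Fin 2) ℂ) :=
    LieRing.ofAssociativeRing
  set T := opAt3 (Sum.inl m) (Sum.inl k) (Sum.inr l)
  have hHml' : Hml = cml • T σm 1 σp + (starRingEnd ℂ) cml • T σp 1 σm := by
    simp only [hHml, T, opAt3, opAt_one, mul_one]
  have hHkl' : Hkl = ckl • T 1 σm σp + (starRingEnd ℂ) ckl • T 1 σp σm := by
    simp only [hHkl, T, opAt3, opAt_one, one_mul]
  have hσz : opAt (Sum.inr l) σz = T 1 1 σz := by simp only [T, opAt3, opAt_one, one_mul]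
  have hfar : ∀ l' ≠ l, Commute Hkl (opAt (Sum.inr l') σz) := fun l' hl' => by
    have hcomm := commute_opAt3_opAt (u := Sum.inl m) (v := Sum.inl k) Sum.inr_ne_inl
      Sum.inr_ne_inl (Sum.inr_injective.ne hl')
    rw [hHkl']
    exact ((hcomm _ _ _ _).smul_left _).add_left ((hcomm _ _ _ _).smul_left _)
  have hinner : ⁅Hkl, HB0⁆ = (ωB l : ℂ) • (ckl • T 1 σm σp - (starRingEnd ℂ) ckl • T 1 σp σm) := by
    rw [hHB0, lie_smul, lie_sum_smul_eq_of_commute _ l hfar, hσz, hHkl',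
      lie_opAt3_flipFlop_σz huv huw hvw]
    module
  have hcoherence : ∀ P Q, (ρ * T P Q σz).trace
      = ((Real.tanh (βBl * ωB l / 2) : ℝ) : ℂ) * (rdm2 (Sum.inl m) (Sum.inl k) ρ * (P ⊗ₖ Q)).trace
        + 2 * (χ 2 * (P ⊗ₖ Q)).trace := fun P Q => by
    rw [trace_mul_opAt3_eq_trace_rdm3_mul huv huw hvw, hdecomp,
      trace_kronecker_pauli_mul_kronecker_σz, trace_gibbsQubit_mul_σz, mul_comm]
  rw [hinner, hHml', lie_smul, lie_opAt3_flipFlop_skewFlipFlop huv huw hvw, hK]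
  simp only [Matrix.mul_smul, Matrix.mul_add, Matrix.mul_neg, trace_neg, trace_smul, trace_add,
    smul_eq_mul]
  rw [hcoherence, hcoherence]
  ring

/-- **decomposition of the cross term into intra- and intersystem coherence
contributions.** For qubits `A_m, A_k, B_l` (`m ≠ k`) with pair interactions
`H_{ml}, H_{kl}`, if the reduced state of `ρ` on the triple decomposes as
`ρ_{A_mA_kB_l} = ρ_{A_mA_k} ⊗ ρ_{B_l} + Σ_a χ^a_A ⊗ σᵃ_{B_l}` with `ρ_{B_l}` Gibbs and
`tr χ^a_A = 0`, then
`-tr(ρ[H_{ml},[H_{kl},H_{B0}]]) = ω_{B_l}[tanh(β_{B_l}ω_{B_l}/2)·tr(ρ_{A_mA_k}K) + 2tr(χ^z_A K)]`,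
where `K = c_{ml}c̄_{kl} σ⁻_{A_m}σ⁺_{A_k} + c̄_{ml}c_{kl} σ⁺_{A_m}σ⁻_{A_k}`. -/
theorem cross_term_coherence_decomposition
    (NA NB : ℕ) (m k : Fin NA) (hmk : m ≠ k) (l : Fin NB)
    (ωB : Fin NB → ℝ) (βBl : ℝ) (cml ckl : ℂ)
    (HB0 Hml Hkl : Matrix ((Fin NA ⊕ Fin NB) → Fin 2) ((Fin NA ⊕ Fin NB) → Fin 2) ℂ)
    (hHB0 : HB0 = (-(1/2) : ℂ) • ∑ l', (ωB l' : ℂ) • opAt (Sum.inr l') σz)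
    (hHml : Hml = cml • (opAt (Sum.inl m) σm * opAt (Sum.inr l) σp)
        + (starRingEnd ℂ) cml • (opAt (Sum.inl m) σp * opAt (Sum.inr l) σm))
    (hHkl : Hkl = ckl • (opAt (Sum.inl k) σm * opAt (Sum.inr l) σp)
        + (starRingEnd ℂ) ckl • (opAt (Sum.inl k) σp * opAt (Sum.inr l) σm))
    (ρ : Matrix ((Fin NA ⊕ Fin NB) → Fin 2) ((Fin NA ⊕ Fin NB) → Fin 2) ℂ)
    (hρ : ρ.PosSemidef) (hρtr : ρ.trace = 1)
    (χ : Fin 3 → Matrix (Fin 2 × Fin 2) (Fin 2 × Fin 2) ℂ)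
    (hχ : ∀ a, (χ a).trace = 0)
    (hdecomp : rdm3 (Sum.inl m) (Sum.inl k) (Sum.inr l) ρ
      = (rdm2 (Sum.inl m) (Sum.inl k) ρ) ⊗ₖ gibbsQubit βBl (ωB l)
        + ∑ a : Fin 3, (χ a) ⊗ₖ (![σx, σy, σz] a))
    (K : Matrix (Fin 2 × Fin 2) (Fin 2 × Fin 2) ℂ)
    (hK : K = (cml * (starRingEnd ℂ) ckl) • (σm ⊗ₖ σp)
        + ((starRingEnd ℂ) cml * ckl) • (σp ⊗ₖ σm)) :
    -((ρ * ⁅Hml, ⁅Hkl, HB0⁆⁆).trace)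
      = (ωB l : ℂ) *
          (((Real.tanh (βBl * ωB l / 2) : ℝ) : ℂ) * ((rdm2 (Sum.inl m) (Sum.inl k) ρ) * K).trace
            + 2 * ((χ 2) * K).trace) :=
  cross_term_coherence_decomposition_general NA NB m k hmk l ωB βBl cml ckl HB0 Hml Hkl hHB0 hHml
    hHkl ρ χ hdecomp K hK
end
end
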